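/- Let n ≥ 2 and N ≥ 1 be integers, A = (a_{ij})_{1≤i,j≤n-1} ∈ M_{n-1}(ℂ), and η_{(1)}, η_{(2)} ∈ (ℂ∖{0})^n with D_i = diag(η_{0i},…,η_{n-1,i}) for i = 1,2. Suppose the orthogonality relation ∑_{x∈X(n,N)} binom(N,x) (∏_{i=0}^{n-1} η_{i1}^{x_i}) φ_A(x;m) conj(φ_A(x;m')) = δ_{m,m'} (∏_{i=0}^{n-1} η_{i2}^{m_i}) / binom(N,m) holds for all m, m' ∈ X(n,N). Then there exists a complex number ζ with ζ^N = 1 such that A₀* D₁ A₀ = ζ D₂, where A₀* is the conjugate transpose of A₀. -/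

import Mathlib

/-!
Multiplying the orthogonality relation by `binom(N,m) s^m binom(N,m') t^m'` and summing, the
generating function of the `φ_A(x;·)` and the multinomial theorem turn it into the identity
`(t ⬝ A₀* D₁ A₀ s)^N = (t ⬝ D₂ s)^N` for all `t, s ∈ ℂⁿ`. On pairs of basis vectors this kills
the off-diagonal entries of `A₀* D₁ A₀` and makes its diagonal entries `N`-th roots of unity
times those of `D₂`; on `t = eᵢ + eⱼ`, `s = dⱼ eᵢ - dᵢ eⱼ`, where the right-hand side vanishes,
it shows that all these roots of unity coincide.
-/
open Finset MvPolynomial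

/-- `X(n,N)`: the set of tuples in `ℕ₀ⁿ` with coordinate sum `N`,
as a `Finset` of functions `Fin n → ℕ`. -/
def XSet (n N : ℕ) : Finset (Fin n → ℕ) :=
  (Fintype.piFinset fun _ : Fin n => Finset.range (N + 1)).filter fun x => ∑ i, x i = N

/-- The multivariate Krawtchouk polynomial `φ_A(x;m)` associated to the bordered
matrix `A₀` (whose row `0` and column `0` consist of ones): it is the coefficient of
`t^m` in the generating function `∏ᵢ (∑ⱼ (A₀)ᵢⱼ tⱼ)^{xᵢ}`, divided by the multinomial
coefficient `binom(N, m) = (∑ mᵢ)! / ∏ mᵢ!`. -/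
noncomputable def phi {n : ℕ} (A0 : Matrix (Fin n) (Fin n) ℂ) (x m : Fin n → ℕ) : ℂ :=
  MvPolynomial.coeff (Finsupp.equivFunOnFinite.symm m)
      (∏ i, (∑ j, MvPolynomial.C (A0 i j) * MvPolynomial.X j) ^ x i)
    / (Nat.multinomial Finset.univ m : ℂ)

open Matrix

section
variable {K ι : Type*} [Field K] [Fintype ι] [DecidableEq ι] {N : ℕ} {M : Matrix ι ι K}
  {d : ι → K}

lemma single_dotProduct_mulVec_single (M : Matrix ι ι K) (j k : ι) :
    Pi.single j 1 ⬝ᵥ M *ᵥ Pi.single k 1 = M j k := by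
  simp [single_dotProduct]

variable (h : ∀ t s : ι → K, (t ⬝ᵥ M *ᵥ s) ^ N = (t ⬝ᵥ diagonal d *ᵥ s) ^ N)
include h

lemma pow_apply_eq_of_forall_pow_dotProduct_mulVec_eq (j k : ι) :
    M j k ^ N = diagonal d j k ^ N := by
  simpa only [single_dotProduct_mulVec_single] using h (Pi.single j 1) (Pi.single k 1)

lemma apply_eq_zero_of_forall_pow_dotProduct_mulVec_eq (hN : N ≠ 0) {j k : ι} (hjk : j ≠ k) :
    M j k = 0 := by
  simpa [hN, hjk] using pow_apply_eq_of_forall_pow_dotProduct_mulVec_eq h j k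

lemma apply_mul_eq_apply_mul_of_forall_pow_dotProduct_mulVec_eq (hN : N ≠ 0) (i j : ι) :
    M j j * d i = M i i * d j := by
  rcases eq_or_ne i j with rfl | hij
  · rfl
  -- `s` is chosen so that the diagonal form vanishes at `(t, s)`.
  have key := h (Pi.single i 1 + Pi.single j 1) (Pi.single i (d j) - Pi.single j (d i))
  simp only [mulVec_sub, mulVec_single, op_smul_eq_smul, dotProduct_sub, dotProduct_smul,
    add_dotProduct, single_dotProduct, dotProduct_single, col_apply, col_diagonal, smul_eq_mul,
    Pi.add_apply, Pi.single_eq_same, Pi.single_eq_of_ne hij, Pi.single_eq_of_ne hij.symm,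
    apply_eq_zero_of_forall_pow_dotProduct_mulVec_eq h hN hij,
    apply_eq_zero_of_forall_pow_dotProduct_mulVec_eq h hN hij.symm,
    one_mul, mul_zero, add_zero, zero_add] at key
  rw [show d j * d i - d i * d j = 0 by ring, zero_pow hN, pow_eq_zero_iff hN] at key
  linear_combination -key

theorem exists_pow_eq_one_eq_smul_diagonal_of_forall_pow_dotProduct_mulVec_eq (hN : N ≠ 0) :
    ∃ ζ : K, ζ ^ N = 1 ∧ M = ζ • diagonal d := by
  have hpow := pow_apply_eq_of_forall_pow_dotProduct_mulVec_eq h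
  by_cases hd : ∃ i, d i ≠ 0
  · obtain ⟨i, hi⟩ := hd
    refine ⟨M i i / d i, ?_, ?_⟩
    · rw [div_pow, hpow, diagonal_apply_eq, div_self (pow_ne_zero _ hi)]
    ext j k
    rcases eq_or_ne j k with rfl | hjk
    · rw [Matrix.smul_apply, diagonal_apply_eq, smul_eq_mul, div_mul_eq_mul_div, eq_div_iff hi,
        apply_mul_eq_apply_mul_of_forall_pow_dotProduct_mulVec_eq h hN]
    · rw [apply_eq_zero_of_forall_pow_dotProduct_mulVec_eq h hN hjk, Matrix.smul_apply,
        diagonal_apply_ne _ hjk, smul_zero]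
  · obtain rfl : d = 0 := funext fun i => not_not.mp fun hi => hd ⟨i, hi⟩
    refine ⟨1, one_pow N, ?_⟩
    ext j k
    simpa [hN] using hpow j k

end

lemma XSet_eq_piAntidiag (n N : ℕ) : XSet n N = piAntidiag univ N := by
  ext x
  simp only [XSet, mem_filter, Fintype.mem_piFinset, mem_range, mem_piAntidiag, mem_univ,
    implies_true, and_true, ne_eq, and_iff_right_iff_imp]
  intro hx i
  exact Nat.lt_succ_of_le (hx ▸ single_le_sum (fun j _ => Nat.zero_le (x j)) (mem_univ i))

section
variable {R : Type*} [CommSemiring R]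

lemma sum_XSet_multinomial_mul_prod_pow (n N : ℕ) (c : Fin n → R) :
    ∑ x ∈ XSet n N, (Nat.multinomial univ x : R) * ∏ i, c i ^ x i = (∑ i, c i) ^ N := by
  rw [XSet_eq_piAntidiag, sum_pow_eq_sum_piAntidiag]

lemma isHomogeneous_prod_sum_C_mul_X_pow {n : ℕ} (A : Matrix (Fin n) (Fin n) R)
    (x : Fin n → ℕ) :
    (∏ i, (∑ j, C (A i j) * X j) ^ x i : MvPolynomial (Fin n) R).IsHomogeneous (∑ i, x i) :=
  IsHomogeneous.prod _ _ _ fun i _ => by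
    simpa using (IsHomogeneous.sum _ _ _ fun j _ => isHomogeneous_C_mul_X (A i j) j).pow (x i)

lemma sum_XSet_eval_eq_eval {n N : ℕ} {P : MvPolynomial (Fin n) R} (hP : P.IsHomogeneous N)
    (t : Fin n → R) :
    ∑ m ∈ XSet n N, coeff (Finsupp.equivFunOnFinite.symm m) P * ∏ l, t l ^ m l = eval t P := by
  have hsupp : P.support ⊆ (XSet n N).map Finsupp.equivFunOnFinite.symm.toEmbedding := by
    intro d hd
    refine mem_map.mpr ⟨d, ?_, Finsupp.equivFunOnFinite.symm_apply_apply d⟩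
    rw [XSet_eq_piAntidiag, mem_piAntidiag, hP.degree_eq_sum_deg_support hd,
      ← Finsupp.degree_apply, Finsupp.degree_eq_sum]
    simp
  calc ∑ m ∈ XSet n N, coeff (Finsupp.equivFunOnFinite.symm m) P * ∏ l, t l ^ m l
      = ∑ d ∈ (XSet n N).map Finsupp.equivFunOnFinite.symm.toEmbedding,
          coeff d P * ∏ l, t l ^ d l := by rw [sum_map]; rfl
    _ = eval t P := by
      rw [eval_eq']
      exact (sum_subset hsupp fun d _ hd => by rw [notMem_support_iff.mp hd, zero_mul]).symm

end

lemma cast_multinomial_ne_zero {α R : Type*} [AddMonoidWithOne R] [CharZero R] (s : Finset α)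
    (f : α → ℕ) : (Nat.multinomial s f : R) ≠ 0 :=
  Nat.cast_ne_zero.mpr (Nat.multinomial_pos s f).ne'

lemma sum_XSet_multinomial_mul_phi_mul_prod_pow {n N : ℕ} (A : Matrix (Fin n) (Fin n) ℂ)
    {x : Fin n → ℕ} (hx : x ∈ XSet n N) (t : Fin n → ℂ) :
    ∑ m ∈ XSet n N, (Nat.multinomial univ m : ℂ) * phi A x m * ∏ l, t l ^ m l
      = ∏ i, (A *ᵥ t) i ^ x i := by
  have hP := isHomogeneous_prod_sum_C_mul_X_pow A x
  rw [(mem_filter.mp hx).2] at hP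
  calc ∑ m ∈ XSet n N, (Nat.multinomial univ m : ℂ) * phi A x m * ∏ l, t l ^ m l
      = ∑ m ∈ XSet n N, coeff (Finsupp.equivFunOnFinite.symm m)
          (∏ i, (∑ j, C (A i j) * X j) ^ x i) * ∏ l, t l ^ m l := by
        refine sum_congr rfl fun m _ => ?_
        rw [phi, mul_div_cancel₀ _ (cast_multinomial_ne_zero univ m)]
    _ = ∏ i, (A *ᵥ t) i ^ x i := by
        simp [sum_XSet_eval_eq_eval hP, mulVec, dotProduct]

lemma starRingEnd_phi {n : ℕ} (A : Matrix (Fin n) (Fin n) ℂ) (x m : Fin n → ℕ) :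
    starRingEnd ℂ (phi A x m) = phi (A.map (starRingEnd ℂ)) x m := by
  rw [phi, phi, map_div₀, map_natCast, ← coeff_map]
  simp only [map_prod, map_pow, map_sum, map_mul, map_C, map_X, Matrix.map_apply]

lemma sum_XSet_multinomial_mul_starRingEnd_phi_mul_prod_pow {n N : ℕ}
    (A : Matrix (Fin n) (Fin n) ℂ) {x : Fin n → ℕ} (hx : x ∈ XSet n N) (t : Fin n → ℂ) :
    ∑ m ∈ XSet n N, (Nat.multinomial univ m : ℂ) * starRingEnd ℂ (phi A x m) * ∏ l, t l ^ m l
      = ∏ i, (A.map (starRingEnd ℂ) *ᵥ t) i ^ x i := by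
  simp only [starRingEnd_phi]
  exact sum_XSet_multinomial_mul_phi_mul_prod_pow _ hx t

lemma dotProduct_conjTranspose_mul_diagonal_mul_mulVec {n : ℕ} (A : Matrix (Fin n) (Fin n) ℂ)
    (η t s : Fin n → ℂ) :
    t ⬝ᵥ (Aᴴ * diagonal η * A) *ᵥ s
      = ∑ i, η i * (A *ᵥ s) i * (A.map (starRingEnd ℂ) *ᵥ t) i := by
  have hconj : A.map (starRingEnd ℂ) *ᵥ t = star (A *ᵥ star t) := by
    ext i; simp [mulVec, dotProduct]
  rw [← mulVec_mulVec, ← mulVec_mulVec, dotProduct_mulVec, vecMul_conjTranspose, hconj]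
  simp only [dotProduct, mulVec_diagonal]
  exact sum_congr rfl fun i _ => by ring

theorem pow_dotProduct_mulVec_eq_of_orthogonality {n N : ℕ} (A0 : Matrix (Fin n) (Fin n) ℂ)
    (η1 η2 : Fin n → ℂ)
    (horth : ∀ m ∈ XSet n N, ∀ m' ∈ XSet n N,
      ∑ x ∈ XSet n N,
          (Nat.multinomial univ x : ℂ) * (∏ i, η1 i ^ x i) *
            phi A0 x m * starRingEnd ℂ (phi A0 x m')
        = if m = m' then (∏ i, η2 i ^ m i) / (Nat.multinomial univ m : ℂ) else 0)
    (t s : Fin n → ℂ) :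
    (t ⬝ᵥ (A0ᴴ * diagonal η1 * A0) *ᵥ s) ^ N = (t ⬝ᵥ diagonal η2 *ᵥ s) ^ N := by
  calc (t ⬝ᵥ (A0ᴴ * diagonal η1 * A0) *ᵥ s) ^ N
      = ∑ x ∈ XSet n N,
          (Nat.multinomial univ x : ℂ) *
            ∏ i, (η1 i * (A0 *ᵥ s) i * (A0.map (starRingEnd ℂ) *ᵥ t) i) ^ x i := by
        rw [dotProduct_conjTranspose_mul_diagonal_mul_mulVec, sum_XSet_multinomial_mul_prod_pow]
    _ = ∑ x ∈ XSet n N, ∑ m ∈ XSet n N, ∑ m' ∈ XSet n N,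
          (Nat.multinomial univ m : ℂ) * (∏ l, s l ^ m l) *
            ((Nat.multinomial univ m' : ℂ) * ∏ l, t l ^ m' l) *
            ((Nat.multinomial univ x : ℂ) * (∏ i, η1 i ^ x i) *
              phi A0 x m * starRingEnd ℂ (phi A0 x m')) := by
        refine sum_congr rfl fun x hx => ?_
        simp only [mul_pow, prod_mul_distrib]
        rw [← sum_XSet_multinomial_mul_phi_mul_prod_pow A0 hx s,
          ← sum_XSet_multinomial_mul_starRingEnd_phi_mul_prod_pow A0 hx t]
        simp only [mul_sum, sum_mul]
        rw [sum_comm]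
        exact sum_congr rfl fun m _ => sum_congr rfl fun m' _ => by ring
    _ = ∑ m ∈ XSet n N, ∑ m' ∈ XSet n N,
          (Nat.multinomial univ m : ℂ) * (∏ l, s l ^ m l) *
            ((Nat.multinomial univ m' : ℂ) * ∏ l, t l ^ m' l) *
            (if m = m' then (∏ i, η2 i ^ m i) / (Nat.multinomial univ m : ℂ) else 0) := by
        rw [sum_comm]
        refine sum_congr rfl fun m hm => ?_
        rw [sum_comm]
        refine sum_congr rfl fun m' hm' => ?_
        rw [← mul_sum, horth m hm m' hm']
    _ = ∑ m ∈ XSet n N, (Nat.multinomial univ m : ℂ) * ∏ l, (t l * (η2 l * s l)) ^ m l := by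
        refine sum_congr rfl fun m hm => ?_
        have hm₀ : (Nat.multinomial univ m : ℂ) ≠ 0 := cast_multinomial_ne_zero univ m
        simp only [mul_ite, mul_zero, sum_ite_eq, if_pos hm, mul_pow, prod_mul_distrib]
        field_simp
    _ = (t ⬝ᵥ diagonal η2 *ᵥ s) ^ N := by
        rw [sum_XSet_multinomial_mul_prod_pow]
        simp only [dotProduct, mulVec_diagonal]

/-- Necessity: if the multivariate Krawtchouk polynomials satisfy the orthogonality
relation, then `A₀* D₁ A₀ = ζ D₂` for some `N`-th root of unity `ζ`. -/
theorem matrix_relation_of_krawtchouk_orthogonality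
    (n N : ℕ) (hN : 1 ≤ N)
    (A0 : Matrix (Fin n) (Fin n) ℂ)
    (η1 η2 : Fin n → ℂ)
    (horth : ∀ m ∈ XSet n N, ∀ m' ∈ XSet n N,
      ∑ x ∈ XSet n N,
          (Nat.multinomial Finset.univ x : ℂ) * (∏ i, η1 i ^ x i) *
            phi A0 x m * (starRingEnd ℂ) (phi A0 x m')
        = if m = m' then (∏ i, η2 i ^ m i) / (Nat.multinomial Finset.univ m : ℂ)
          else 0) :
    ∃ ζ : ℂ, ζ ^ N = 1 ∧
      A0.conjTranspose * Matrix.diagonal η1 * A0 = ζ • Matrix.diagonal η2 :=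
  exists_pow_eq_one_eq_smul_diagonal_of_forall_pow_dotProduct_mulVec_eq
    (pow_dotProduct_mulVec_eq_of_orthogonality A0 η1 η2 horth) (by omega)
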